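/- Let G and H be loopless digraphs, α, β : G → H homomorphisms, and let u → v be an arc of G. Let S_u be a reduced walk of even length from α(u) to β(u), and let S_v be the reduced walk obtained from (α(v) α(u)) · S_u · (β(u) β(v)) in π(H). Then S_u is OUT-compatible if and only if S_v is IN-compatible. -/

import Mathlib

namespace HRecoloring

/-- A digraph: a vertex type together with an arc relation. -/
structure Dgraph (V : Type) where
  Adj : V → V → Prop

variable {V X : Type}

/-- Adjacency in the underlying undirected graph. -/
def Dgraph.UAdj (G : Dgraph V) (u v : V) : Prop := G.Adj u v ∨ G.Adj v u

/-- A digraph is loopless if it has no arc `v → v`. -/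
def Dgraph.Loopless (G : Dgraph V) : Prop := ∀ v, ¬ G.Adj v v

/-- A digraph is reflexive if `v → v` for every vertex `v`. -/
def Dgraph.IsReflexive (G : Dgraph V) : Prop := ∀ v, G.Adj v v

/-- A symmetric digraph, which we identify with an undirected graph. -/
def Dgraph.IsSymmetric (G : Dgraph V) : Prop := ∀ u v, G.Adj u v → G.Adj v u

/-- The underlying undirected graph, as a symmetric digraph. -/
def Dgraph.usym (G : Dgraph V) : Dgraph V := ⟨fun u v => G.UAdj u v⟩

/-- A (di)graph homomorphism. -/
def IsHom (G : Dgraph V) (H : Dgraph X) (f : V → X) : Prop :=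
  ∀ ⦃u v⦄, G.Adj u v → H.Adj (f u) (f v)

/-- A walk from `a` to `b`, encoded by its list of successive vertices.
A walk in a digraph is a walk in its underlying undirected graph. -/
def IsWalk (G : Dgraph V) (a b : V) (l : List V) : Prop :=
  l ≠ [] ∧ l.head? = some a ∧ l.getLast? = some b ∧ l.Chain' G.UAdj

/-- Weak connectivity. -/
def Dgraph.WConn (G : Dgraph V) : Prop := ∀ u v : V, ∃ l, IsWalk G u v l

/-- Concatenation of two walks sharing an endpoint. -/
def wcomp (l₁ l₂ : List V) : List V := l₁ ++ l₂.tail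

/-- Number of edges of a walk. -/
def wlen (l : List V) : ℕ := l.length - 1

/-- One reduction step on walks: delete a backtracking pair `(x y)(y x)` or a
one-edge loop step `(x x)`. -/
def RStep (l l' : List V) : Prop :=
  (∃ (p s : List V) (x y : V), l = p ++ [x, y, x] ++ s ∧ l' = p ++ [x] ++ s) ∨
  (∃ (p s : List V) (x : V), l = p ++ [x, x] ++ s ∧ l' = p ++ [x] ++ s)

/-- Equality of walks in the fundamental groupoid `π(H)`: the equivalence
generated by reduction steps (two walks are equal in `π(H)` iff they reduce to
the same reduced walk). -/
def PiEq (l l' : List V) : Prop := Relation.EqvGen RStep l l'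

/-- A walk is reduced if no reduction step applies to it. -/
def IsReduced (l : List V) : Prop := ∀ l', ¬ RStep l l'

/-- A closed walk is cyclically reduced if it is reduced and its first and last
edges are not inverses of each other. -/
def IsCycReduced (l : List V) : Prop :=
  IsReduced l ∧ ∃ h : 2 ≤ l.length,
    l.get ⟨1, by omega⟩ ≠ l.get ⟨l.length - 2, by omega⟩

/-- `n`-fold concatenation of a closed walk `R` based at `h`. -/
def witer (R : List V) (h : V) : ℕ → List V
  | 0 => [h]
  | n + 1 => wcomp R (witer R h n)

/-- `Rⁿ` for an integer `n`, for a closed walk `R` based at `h`; for `n < 0`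
this is the `|n|`-fold concatenation of the reversed walk `R⁻¹`. -/
def zpowWalk (R : List V) (h : V) (n : ℤ) : List V :=
  if 0 ≤ n then witer R h n.toNat else witer R.reverse h (-n).toNat

/-- A walk is symmetric if every edge it traverses is a symmetric arc. -/
def IsSymWalk (H : Dgraph X) (l : List X) : Prop :=
  l.Chain' fun a b => H.Adj a b ∧ H.Adj b a

/-- The conjugated walk `α(W)⁻¹ · Q · β(W)`. -/
def conj (α β : V → X) (Wl : List V) (Q : List X) : List X :=
  wcomp (wcomp (Wl.map α).reverse Q) (Wl.map β)

/-- Topological validity of a walk `Q` from `α q` to `β q`: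
`β(C) = Q⁻¹ · α(C) · Q` in `π(H)` for every closed walk `C` at `q`. -/
def TopValid (G : Dgraph V) (H : Dgraph X) (α β : V → X) (q : V) (Q : List X) : Prop :=
  ∀ C : List V, IsWalk G q q C →
    PiEq (C.map β) (wcomp (wcomp Q.reverse (C.map α)) Q)

/-- IN-zigzag pattern `a₁ ← a₂ → a₃ ← … ← a_{n-1} → a_n`. -/
def INCompatible (H : Dgraph X) (l : List X) : Prop :=
  ∀ (i : ℕ) (h : i + 1 < l.length),
    if i % 2 = 0 then H.Adj (l.get ⟨i + 1, h⟩) (l.get ⟨i, by omega⟩)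
    else H.Adj (l.get ⟨i, by omega⟩) (l.get ⟨i + 1, h⟩)

/-- OUT-zigzag pattern `a₁ → a₂ ← a₃ → … → a_{n-1} ← a_n`. -/
def OUTCompatible (H : Dgraph X) (l : List X) : Prop :=
  ∀ (i : ℕ) (h : i + 1 < l.length),
    if i % 2 = 0 then H.Adj (l.get ⟨i, by omega⟩) (l.get ⟨i + 1, h⟩)
    else H.Adj (l.get ⟨i + 1, h⟩) (l.get ⟨i, by omega⟩)

/-- A vertex is of type IN if it has an in-neighbor. -/
def TypeIN (G : Dgraph V) (v : V) : Prop := ∃ u, G.Adj u v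

/-- A vertex is of type OUT if it has an out-neighbor. -/
def TypeOUT (G : Dgraph V) (v : V) : Prop := ∃ u, G.Adj v u

/-- A vertex is of type SYM if it is of type IN and of type OUT. -/
def TypeSYM (G : Dgraph V) (v : V) : Prop := TypeIN G v ∧ TypeOUT G v

/-- The zigzag condition for the vertex `v`. -/
def Zigzag (G : Dgraph V) (H : Dgraph X) (v : V) (l : List X) : Prop :=
  (TypeIN G v → INCompatible H l) ∧ (TypeOUT G v → OUTCompatible H l)

/-- A recoloring sequence: a nonempty sequence of homomorphisms in which
consecutive homomorphisms differ on exactly one vertex. -/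
def IsRecolSeq (G : Dgraph V) (H : Dgraph X) (σs : List (V → X)) : Prop :=
  σs ≠ [] ∧ (∀ σ ∈ σs, IsHom G H σ) ∧ σs.Chain' fun σ σ' => ∃! u, σ u ≠ σ' u

/-- The monochromatic neighborhood property: whenever a vertex changes its
color, all of its neighbors (in the underlying undirected graph) have one
common color. -/
def MonoNbhd (G : Dgraph V) (σs : List (V → X)) : Prop :=
  σs.Chain' fun σ σ' => ∀ v, σ v ≠ σ' v → ∃ h, ∀ w, G.UAdj v w → σ w = h

/-- `VWalk G v σs S`: `S` is the vertex walk `S(v)` of the recoloring sequence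
`σs`; each color change of `v` from `a` to `b`, while all neighbors of `v` are
colored `h`, contributes the two edges `(a h)(h b)`. -/
inductive VWalk (G : Dgraph V) (v : V) : List (V → X) → List X → Prop
  | single (σ : V → X) : VWalk G v [σ] [σ v]
  | stay {σ σ' : V → X} {rest : List (V → X)} {l : List X} :
      σ v = σ' v → VWalk G v (σ' :: rest) l → VWalk G v (σ :: σ' :: rest) l
  | move {σ σ' : V → X} {rest : List (V → X)} {l : List X} (h : X) :
      σ v ≠ σ' v → (∀ w, G.UAdj v w → σ w = h) →
      VWalk G v (σ' :: rest) l → VWalk G v (σ :: σ' :: rest) (σ v :: h :: l)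

/-- `H`-realizability of a walk `Q` via recoloring sequences satisfying the
monochromatic neighborhood property: `Q = S(q)` in `π(H)`. -/
def MRealizable (G : Dgraph V) (H : Dgraph X) (α β : V → X) (q : V) (Q : List X) : Prop :=
  ∃ (σs : List (V → X)) (Sq : List X),
    IsRecolSeq G H σs ∧ σs.head? = some α ∧ σs.getLast? = some β ∧
    MonoNbhd G σs ∧ VWalk G q σs Sq ∧ PiEq Sq Q

/-- Orientation compatibility of a walk `Q`: every generated vertex walk
satisfies the zigzag condition. -/
def OrientCompatible (G : Dgraph V) (H : Dgraph X) (α β : V → X) (q : V) (Q : List X) : Prop :=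
  ∀ (v : V) (Wl : List V), IsWalk G q v Wl →
    ∀ S : List X, IsReduced S → PiEq (conj α β Wl Q) S → Zigzag G H v S

/-- Hom₁-adjacency: the homomorphisms differ on exactly one vertex and, for
every arc `x → y` of `G`, both `φ x → ψ y` and `ψ x → φ y` are arcs of `H`. -/
def Hom1Adj (G : Dgraph V) (H : Dgraph X) (φ ψ : V → X) : Prop :=
  (∃! u, φ u ≠ ψ u) ∧ ∀ ⦃x y⦄, G.Adj x y → H.Adj (φ x) (ψ y) ∧ H.Adj (ψ x) (φ y)

/-- A recoloring sequence in the Hom₁ sense (digraphs). -/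
def Hom1Seq (G : Dgraph V) (H : Dgraph X) (σs : List (V → X)) : Prop :=
  σs ≠ [] ∧ (∀ σ ∈ σs, IsHom G H σ) ∧ σs.Chain' (Hom1Adj G H)

/-- A recoloring sequence in which each step recolors exactly one vertex to an
adjacent color (the Hom₁ sense for reflexive undirected graphs). -/
def AdjRecolSeq (G : Dgraph V) (H : Dgraph X) (σs : List (V → X)) : Prop :=
  σs ≠ [] ∧ (∀ σ ∈ σs, IsHom G H σ) ∧
  σs.Chain' fun σ σ' => (∃! u, σ u ≠ σ' u) ∧ ∀ u, σ u ≠ σ' u → H.Adj (σ u) (σ' u)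

/-- The push-or-pull property: whenever a vertex changes its color from `a` to
`b`, every neighbor of that vertex has color `a` or `b`. -/
def PushOrPull (G : Dgraph V) (σs : List (V → X)) : Prop :=
  σs.Chain' fun σ σ' => ∀ u, σ u ≠ σ' u → ∀ w, G.UAdj u w → σ w = σ u ∨ σ w = σ' u

/-- The walk of successive colors of `v` along a recoloring sequence. -/
def colorWalk (σs : List (V → X)) (v : V) : List X := σs.map fun σ => σ v

/-- `H`-realizability via recoloring sequences (reflexive undirected Hom₁
sense) satisfying the push-or-pull property. -/
def PRealizable (G : Dgraph V) (H : Dgraph X) (α β : V → X) (q : V) (Q : List X) : Prop :=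
  ∃ σs : List (V → X), AdjRecolSeq G H σs ∧ σs.head? = some α ∧ σs.getLast? = some β ∧
    PushOrPull G σs ∧ PiEq (colorWalk σs q) Q

/-- `H`-realizability via Hom₁ recoloring sequences of digraphs satisfying the
push-or-pull property. -/
def DRealizable (G : Dgraph V) (H : Dgraph X) (α β : V → X) (q : V) (Q : List X) : Prop :=
  ∃ σs : List (V → X), Hom1Seq G H σs ∧ σs.head? = some α ∧ σs.getLast? = some β ∧
    PushOrPull G σs ∧ PiEq (colorWalk σs q) Q

/-- `H` contains no 4-cycle of algebraic girth 0 as a subgraph (neither of the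
two orientations of the 4-cycle with two forward and two backward arcs). -/
def NoZeroGirthC4 (H : Dgraph X) : Prop :=
  ∀ a b c d : X, a ≠ b → a ≠ c → a ≠ d → b ≠ c → b ≠ d → c ≠ d →
    ¬(H.Adj a b ∧ H.Adj b d ∧ H.Adj a c ∧ H.Adj c d) ∧
    ¬(H.Adj a b ∧ H.Adj d b ∧ H.Adj a c ∧ H.Adj d c)

/-- `H` contains no triangle of algebraic girth 1 as a subgraph. -/
def NoOneGirthTriangle (H : Dgraph X) : Prop :=
  ∀ x y z : X, x ≠ y → y ≠ z → x ≠ z → ¬(H.Adj x y ∧ H.Adj y z ∧ H.Adj x z)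

/-- A path in the reconfiguration graph `R_H(G)` from `α` to `β`. -/
def IsRPath (G : Dgraph V) (H : Dgraph X) (α β : V → X) (L : List (V → X)) : Prop :=
  L ≠ [] ∧ L.head? = some α ∧ L.getLast? = some β ∧
  (∀ σ ∈ L, IsHom G H σ) ∧ L.Chain' fun φ ψ => ∃! u, φ u ≠ ψ u

/-- A path in the graph `Hom₁(G, H)` from `α` to `β`. -/
def IsHom1Path (G : Dgraph V) (H : Dgraph X) (α β : V → X) (L : List (V → X)) : Prop :=
  L ≠ [] ∧ L.head? = some α ∧ L.getLast? = some β ∧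
  (∀ σ ∈ L, IsHom G H σ) ∧ L.Chain' (Hom1Adj G H)

/-- The set of reduced walks `Q` from `α q` to `β q` that generate symmetric
vertex walks on `V'` with the system of walks `Wf`. -/
def SymGenSet (H : Dgraph X) (α β : V → X) (q : V)
    (V' : Set V) (Wf : V → List V) : Set (List X) :=
  {Q | IsWalk H (α q) (β q) Q ∧ IsReduced Q ∧
    ∀ v ∈ V', ∀ S : List X, IsReduced S → PiEq (conj α β (Wf v) Q) S → IsSymWalk H S}

/-- The set of orientation-compatible walks for `q` and the system `Uf`. -/
def OCSet (G : Dgraph V) (H : Dgraph X) (α β : V → X) (q : V)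
    (Uf : V → List V) : Set (List X) :=
  {Q | IsWalk H (α q) (β q) Q ∧ IsReduced Q ∧ Even (wlen Q) ∧
    ∀ (v : V) (S : List X), IsReduced S → PiEq (conj α β (Uf v) Q) S → Zigzag G H v S}

/-- The set `Π_q` of walks from `α q` to `β q` that are `H`-realizable via
recoloring sequences satisfying the monochromatic neighborhood property. -/
def MRealSet (G : Dgraph V) (H : Dgraph X) (α β : V → X) (q : V) : Set (List X) :=
  {Q | IsWalk H (α q) (β q) Q ∧ IsReduced Q ∧ MRealizable G H α β q Q}

/-- The set of walks from `α q` to `β q` that are `H`-realizable via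
recoloring sequences satisfying the push-or-pull property. -/
def PRealSet (G : Dgraph V) (H : Dgraph X) (α β : V → X) (q : V) : Set (List X) :=
  {Q | IsWalk H (α q) (β q) Q ∧ IsReduced Q ∧ PRealizable G H α β q Q}

/-- Ceiling division on natural numbers. -/
def cdiv (a b : ℕ) : ℕ := (a + b - 1) / b

end HRecoloring

open HRecoloring

/-!
Prepending the arc `(α v α u)` to `S_u` either cancels its first edge or extends it; in both
cases the result is reduced, the parity of its length flips, and it is IN-compatible exactly when
`S_u` is OUT-compatible. Appending `(β u β v)` is the same operation on the reversed walk, since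
reversal exchanges IN and OUT on walks with an even number of vertices and preserves
IN-compatibility on walks with an odd number. Reduced representatives in `π(H)` are unique: mapping
each edge `(a b)` to `g_{ab} g_{ba}⁻¹` sends walks to free-group words, equal walks in `π(H)` to
equal elements and reduced walks to reduced words.
-/

namespace HRecoloring

variable {X : Type}

theorem PiEq.map {f : List X → List X} (hf : ∀ l l', RStep l l' → RStep (f l) (f l'))
    {l l' : List X} (h : PiEq l l') : PiEq (f l) (f l') :=
  Quot.eqvGen_exact <|
    congrArg (Quot.lift (Quot.mk RStep ∘ f) fun _ _ hs => Quot.sound (hf _ _ hs))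
      (Quot.eqvGen_sound h)

theorem PiEq.apply_eq {β : Type*} {f : List X → β} (hf : ∀ l l', RStep l l' → f l = f l')
    {l l' : List X} (h : PiEq l l') : f l = f l' :=
  congrArg (Quot.lift f hf) (Quot.eqvGen_sound h)

theorem RStep.append_right {l l' : List X} (z : List X) (h : RStep l l') :
    RStep (l ++ z) (l' ++ z) := by
  rcases h with ⟨p, s, x, y, rfl, rfl⟩ | ⟨p, s, x, rfl, rfl⟩
  · exact Or.inl ⟨p, s ++ z, x, y, by simp, by simp⟩
  · exact Or.inr ⟨p, s ++ z, x, by simp, by simp⟩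

theorem RStep.reverse {l l' : List X} (h : RStep l l') : RStep l.reverse l'.reverse := by
  rcases h with ⟨p, s, x, y, rfl, rfl⟩ | ⟨p, s, x, rfl, rfl⟩
  · exact Or.inl ⟨s.reverse, p.reverse, x, y, by simp, by simp⟩
  · exact Or.inr ⟨s.reverse, p.reverse, x, by simp, by simp⟩

theorem RStep.head?_eq {l l' : List X} (h : RStep l l') : l.head? = l'.head? := by
  rcases h with ⟨p, s, x, y, rfl, rfl⟩ | ⟨p, s, x, rfl, rfl⟩ <;> cases p <;> simp

theorem PiEq.append_right {l l' : List X} (z : List X) (h : PiEq l l') :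
    PiEq (l ++ z) (l' ++ z) :=
  h.map fun _ _ => RStep.append_right z

theorem PiEq.reverse {l l' : List X} (h : PiEq l l') : PiEq l.reverse l'.reverse :=
  h.map fun _ _ => RStep.reverse

theorem PiEq.head?_eq {l l' : List X} (h : PiEq l l') : l.head? = l'.head? :=
  h.apply_eq fun _ _ => RStep.head?_eq

theorem PiEq.trans {l l' l'' : List X} (h : PiEq l l') (h' : PiEq l' l'') : PiEq l l'' :=
  Relation.EqvGen.trans _ _ _ h h'

theorem PiEq.symm {l l' : List X} (h : PiEq l l') : PiEq l' l :=
  Relation.EqvGen.symm _ _ h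

theorem IsReduced.reverse {l : List X} (h : IsReduced l) : IsReduced l.reverse := fun l' hl' =>
  h l'.reverse (by simpa using hl'.reverse)

theorem isReduced_cons_cons {a b : X} {t : List X} :
    IsReduced (a :: b :: t) ↔ a ≠ b ∧ t.head? ≠ some a ∧ IsReduced (b :: t) := by
  refine ⟨fun h => ⟨?_, ?_, ?_⟩, ?_⟩
  · rintro rfl
    exact h (a :: t) (Or.inr ⟨[], t, a, by simp, by simp⟩)
  · intro ht
    obtain ⟨s, rfl⟩ : ∃ s, t = a :: s := by
      cases t with
      | nil => simp at ht
      | cons c s => exact ⟨s, by simpa using ht⟩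
    exact h (a :: s) (Or.inl ⟨[], s, a, b, by simp, by simp⟩)
  · rintro l' (⟨p, s, x, y, hl, -⟩ | ⟨p, s, x, hl, -⟩)
    · exact h _ (Or.inl ⟨a :: p, s, x, y, by simp [hl], rfl⟩)
    · exact h _ (Or.inr ⟨a :: p, s, x, by simp [hl], rfl⟩)
  · rintro ⟨hab, hta, hred⟩ l' (⟨p, s, x, y, hl, -⟩ | ⟨p, s, x, hl, -⟩)
    · rcases p with _ | ⟨c, p⟩
      · simp only [List.nil_append, List.cons_append, List.cons.injEq] at hl
        obtain ⟨rfl, -, rfl, -⟩ := hl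
        exact hta (by simp)
      · simp only [List.cons_append, List.cons.injEq] at hl
        exact hred _ (Or.inl ⟨p, s, x, y, by simp [hl.2], rfl⟩)
    · rcases p with _ | ⟨c, p⟩
      · simp only [List.nil_append, List.cons_append, List.cons.injEq] at hl
        exact hab (hl.1.trans hl.2.1.symm)
      · simp only [List.cons_append, List.cons.injEq] at hl
        exact hred _ (Or.inr ⟨p, s, x, by simp [hl.2], rfl⟩)

theorem IsReduced.of_cons {a : X} {l : List X} (h : IsReduced (a :: l)) : IsReduced l := by
  rcases l with _ | ⟨b, t⟩
  · rintro l' (⟨p, s, x, y, hl, -⟩ | ⟨p, s, x, hl, -⟩) <;> simp at hl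
  · exact (isReduced_cons_cons.1 h).2.2

/-- Backtracks `(a b)(b a)` and loops `(a a)` cancel freely in this word. -/
def edgeWord : List X → List ((X × X) × Bool)
  | a :: b :: t => ((a, b), true) :: ((b, a), false) :: edgeWord (b :: t)
  | _ => []

theorem edgeWord_append_cons : ∀ (p : List X) (x : X) (s : List X),
    edgeWord (p ++ x :: s) = edgeWord (p ++ [x]) ++ edgeWord (x :: s)
  | [], _, _ => by simp [edgeWord]
  | [_], _, _ => by simp [edgeWord]
  | a :: b :: p, x, s => by
    have := edgeWord_append_cons (b :: p) x s
    simp only [List.cons_append] at this ⊢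
    simp [edgeWord, this]

theorem mk_edgeWord_cons_cons (a b : X) (t : List X) :
    FreeGroup.mk (edgeWord (a :: b :: t)) =
      FreeGroup.of (a, b) * (FreeGroup.of (b, a))⁻¹ * FreeGroup.mk (edgeWord (b :: t)) := by
  simp [edgeWord, FreeGroup.of, FreeGroup.inv_mk, FreeGroup.invRev, FreeGroup.mul_mk]

theorem RStep.mk_edgeWord_eq {l l' : List X} (h : RStep l l') :
    FreeGroup.mk (edgeWord l) = FreeGroup.mk (edgeWord l') := by
  have split (p : List X) (x : X) (s : List X) : FreeGroup.mk (edgeWord (p ++ x :: s)) =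
      FreeGroup.mk (edgeWord (p ++ [x])) * FreeGroup.mk (edgeWord (x :: s)) := by
    rw [edgeWord_append_cons, FreeGroup.mul_mk]
  rcases h with ⟨p, s, x, y, rfl, rfl⟩ | ⟨p, s, x, rfl, rfl⟩
  · rw [show p ++ [x, y, x] ++ s = p ++ x :: y :: x :: s by simp,
      show p ++ [x] ++ s = p ++ x :: s by simp, split p x (y :: x :: s), split p x s,
      mk_edgeWord_cons_cons, mk_edgeWord_cons_cons]
    group
  · rw [show p ++ [x, x] ++ s = p ++ x :: x :: s by simp,
      show p ++ [x] ++ s = p ++ x :: s by simp, split p x (x :: s), split p x s,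
      mk_edgeWord_cons_cons]
    group

theorem PiEq.mk_edgeWord_eq {l l' : List X} (h : PiEq l l') :
    FreeGroup.mk (edgeWord l) = FreeGroup.mk (edgeWord l') :=
  h.apply_eq fun _ _ => RStep.mk_edgeWord_eq

theorem IsReduced.isReduced_edgeWord : ∀ {l : List X}, IsReduced l →
    FreeGroup.IsReduced (edgeWord l)
  | [], _ | [_], _ => by simp [edgeWord]
  | [a, b], h => by
    simpa [edgeWord] using fun hab _ => (isReduced_cons_cons.1 h).1 hab
  | a :: b :: c :: t, h => by
    obtain ⟨hab, hca, h'⟩ := isReduced_cons_cons.1 h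
    have := h'.isReduced_edgeWord
    simp only [edgeWord] at this ⊢
    refine FreeGroup.isReduced_cons_cons.2 ⟨?_, FreeGroup.isReduced_cons_cons.2 ⟨?_, this⟩⟩
    · simpa using fun h _ => hab h
    · simpa using fun h => hca (by simp [h])

theorem edgeWord_injective : ∀ {l l' : List X}, l.head? = l'.head? →
    edgeWord l = edgeWord l' → l = l'
  | [], [], _, _ => rfl
  | [], _ :: _, h, _ | _ :: _, [], h, _ => by simp at h
  | [_], [_], h, _ => by simpa using h
  | [_], _ :: _ :: _, _, h | _ :: _ :: _, [_], _, h => by simp [edgeWord] at h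
  | a :: b :: t, a' :: b' :: t', hh, h => by
    simp only [edgeWord, List.cons.injEq, Prod.mk.injEq] at h
    obtain ⟨⟨⟨rfl, rfl⟩, -⟩, -, h⟩ := h
    rw [edgeWord_injective (l := b :: t) (l' := b :: t') rfl h]

theorem IsReduced.eq_of_piEq {l l' : List X} (hl : IsReduced l) (hl' : IsReduced l')
    (h : PiEq l l') : l = l' := by
  classical
  refine edgeWord_injective h.head?_eq ?_
  rw [← hl.isReduced_edgeWord.reduce_eq, ← hl'.isReduced_edgeWord.reduce_eq]
  exact FreeGroup.reduce.sound h.mk_edgeWord_eq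

section Compatible

/-- `OUTCompatible H` is `INCompatible H.reverse` by definition. -/
def Dgraph.reverse (H : Dgraph X) : Dgraph X := ⟨fun a b => H.Adj b a⟩

variable {H : Dgraph X}

theorem inCompatible_cons_cons {a b : X} {t : List X} :
    INCompatible H (a :: b :: t) ↔ H.Adj b a ∧ OUTCompatible H (b :: t) := by
  refine ⟨fun h => ⟨by simpa using h 0 (by simp), fun i hi => ?_⟩, ?_⟩
  · have := h (i + 1) (by simp at hi ⊢; omega)
    simp only [List.get_eq_getElem, List.getElem_cons_succ] at this ⊢
    split_ifs at this ⊢ <;> first | exact this | omega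
  · rintro ⟨hba, h⟩ (_ | i) hi
    · simpa using hba
    · have := h i (by simp at hi ⊢; omega)
      simp only [List.get_eq_getElem, List.getElem_cons_succ] at this ⊢
      split_ifs at this ⊢ <;> first | exact this | omega

theorem outCompatible_cons_cons {a b : X} {t : List X} :
    OUTCompatible H (a :: b :: t) ↔ H.Adj a b ∧ INCompatible H (b :: t) :=
  inCompatible_cons_cons (H := H.reverse)

theorem INCompatible.reverse_of_even {l : List X} (hl : Even l.length) (h : INCompatible H l) :
    OUTCompatible H l.reverse := by
  intro j hj
  rw [List.length_reverse] at hj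
  have := h (l.length - 2 - j) (by omega)
  have hpar : (l.length - 2 - j) % 2 = j % 2 := by obtain ⟨k, hk⟩ := hl; omega
  simp only [List.get_eq_getElem, List.getElem_reverse, hpar] at this ⊢
  convert this using 3 <;> omega

theorem INCompatible.reverse_of_odd {l : List X} (hl : Odd l.length) (h : INCompatible H l) :
    INCompatible H l.reverse := by
  intro j hj
  rw [List.length_reverse] at hj
  have := h (l.length - 2 - j) (by omega)
  have hpar : (l.length - 2 - j) % 2 = (j + 1) % 2 := by obtain ⟨k, hk⟩ := hl; omega
  simp only [List.get_eq_getElem, List.getElem_reverse, hpar] at this ⊢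
  split_ifs at this ⊢ <;> first | omega | convert this using 2 <;> omega

theorem outCompatible_reverse_iff {l : List X} (hl : Even l.length) :
    OUTCompatible H l.reverse ↔ INCompatible H l :=
  ⟨fun h => by
    have := INCompatible.reverse_of_even (H := H.reverse) (by simpa using hl) h
    rwa [List.reverse_reverse] at this,
    fun h => h.reverse_of_even hl⟩

theorem inCompatible_reverse_iff {l : List X} (hl : Odd l.length) :
    INCompatible H l.reverse ↔ INCompatible H l :=
  ⟨fun h => by simpa using h.reverse_of_odd (by simpa using hl), fun h => h.reverse_of_odd hl⟩

theorem exists_reduced_cons_of_adj (hH : H.Loopless) {a z : X} {l : List X}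
    (hl : IsReduced l) (hhead : l.head? = some a) (hadj : H.Adj a z) :
    ∃ T, PiEq (z :: l) T ∧ IsReduced T ∧ T.getLast? = l.getLast? ∧
      (Even T.length ↔ Odd l.length) ∧ (INCompatible H T ↔ OUTCompatible H l) := by
  obtain ⟨t, rfl⟩ := List.head?_eq_some_iff.1 hhead
  by_cases hback : t.head? = some z
  · obtain ⟨t', rfl⟩ := List.head?_eq_some_iff.1 hback
    refine ⟨z :: t', .rel _ _ (Or.inl ⟨[], t', z, a, rfl, rfl⟩), hl.of_cons, by simp, ?_, ?_⟩
    · simp [Nat.even_add_one, Nat.odd_add_one]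
    · rw [outCompatible_cons_cons, and_iff_right hadj]
  · have hza : z ≠ a := by
      rintro rfl
      exact hH z hadj
    refine ⟨z :: a :: t, .refl _, isReduced_cons_cons.2 ⟨hza, hback, hl⟩, by simp, ?_, ?_⟩
    · simp [Nat.even_add_one, Nat.odd_add_one]
    · rw [inCompatible_cons_cons, and_iff_right hadj]

end Compatible

end HRecoloring

theorem statement7_general {V X : Type}
    (G : Dgraph V) (H : Dgraph X)
    (hHll : H.Loopless)
    (α β : V → X) (hα : IsHom G H α) (hβ : IsHom G H β)
    (u v : V) (huv : G.Adj u v)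
    (Su : List X) (hSu : IsWalk H (α u) (β u) Su)
    (hSured : IsReduced Su) (hSueven : Even (wlen Su))
    (Sv : List X) (hSvred : IsReduced Sv)
    (hSv : PiEq (wcomp (wcomp [α v, α u] Su) [β u, β v]) Sv) :
    OUTCompatible H Su ↔ INCompatible H Sv := by
  obtain ⟨hne, hhead, hlast, -⟩ := hSu
  have hSuodd : Odd Su.length := by
    have := List.length_pos_iff.2 hne
    rw [wlen, Nat.even_iff] at hSueven
    rw [Nat.odd_iff]
    omega
  obtain ⟨T, hT, hTred, hTlast, hTlen, hTcompat⟩ :=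
    exists_reduced_cons_of_adj hHll hSured hhead (hα huv)
  obtain ⟨S, hS, hSred, -, hSlen, hScompat⟩ :=
    exists_reduced_cons_of_adj hHll hTred.reverse
      (by rw [List.head?_reverse, hTlast, hlast]) (hβ huv)
  have hTeven : Even T.length := hTlen.2 hSuodd
  have hSodd : Odd S.length := by
    rw [← Nat.not_even_iff_odd, hSlen, List.length_reverse, Nat.not_odd_iff_even]
    exact hTeven
  have hWalk : wcomp (wcomp [α v, α u] Su) [β u, β v] = α v :: Su ++ [β v] := by
    obtain ⟨t, rfl⟩ := List.head?_eq_some_iff.1 hhead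
    simp [wcomp]
  have hSv_eq : Sv = S.reverse := by
    refine hSvred.eq_of_piEq hSred.reverse (hSv.symm.trans ?_)
    rw [hWalk]
    have hS' : PiEq (T ++ [β v]) S.reverse := by simpa using hS.reverse
    simpa using (hT.append_right [β v]).trans hS'
  rw [hSv_eq, inCompatible_reverse_iff hSodd, hScompat, outCompatible_reverse_iff hTeven,
    hTcompat]

/-- For an arc `u → v` of `G`, a reduced even-length walk `S_u` from `α u` to
`β u` is OUT-compatible iff the reduced walk `S_v` obtained from
`(α v, α u) · S_u · (β u, β v)` is IN-compatible. -/
theorem statement7 {V X : Type}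
    (G : Dgraph V) (H : Dgraph X)
    (hGll : G.Loopless) (hHll : H.Loopless)
    (α β : V → X) (hα : IsHom G H α) (hβ : IsHom G H β)
    (u v : V) (huv : G.Adj u v)
    (Su : List X) (hSu : IsWalk H (α u) (β u) Su)
    (hSured : IsReduced Su) (hSueven : Even (wlen Su))
    (Sv : List X) (hSvred : IsReduced Sv)
    (hSv : PiEq (wcomp (wcomp [α v, α u] Su) [β u, β v]) Sv) :
    OUTCompatible H Su ↔ INCompatible H Sv :=
  statement7_general G H hHll α β hα hβ u v huv Su hSu hSured hSueven Sv hSvred hSv
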